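/- If G, F ∈ K are such that the polynomial x^{2n} − 2Gx^n + F^n is irreducible in K[x] (K a field of characteristic 0 containing a primitive n-th root of unity), then L = K[x]/(x^{2n} − 2Gx^n + F^n) is a Galois extension of K with Galois group isomorphic to the dihedral group D_n, where the action is generated by σ(x) = ξ_n x and τ(x) = F/x. -/

import Mathlib

/-!
Irreducibility forces `n ≠ 0` and `F ≠ 0`, so the class `θ` of `x` is a unit of `L`. Since
`θⁿ · (F/θ)ⁿ = Fⁿ` and, by `P(θ) = 0`, `θⁿ + (F/θ)ⁿ = 2G`, the polynomial factors over `L` as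
`P = (Xⁿ - θⁿ)(Xⁿ - (F/θ)ⁿ)`; with `ξ` at hand its roots are the `ξⁱθ` and `ξⁱF/θ`, all
in `L`. Hence `L` is a splitting field of the separable `P`, so it is Galois of degree `2n`,
and every automorphism is `θ ↦ ξⁱθ` or `θ ↦ ξⁱF/θ`. The automorphisms `σ : θ ↦ ξθ` and
`τ : θ ↦ F/θ` satisfy `σⁿ = τ² = 1` and `τστ = σ⁻¹`, which gives a homomorphism
`D_n → Aut(L/K)`; it is onto by the description of the automorphisms, hence bijective since
both groups have order `2n`.
-/

open Polynomial

namespace DihedralGroup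

variable {n : ℕ} {G : Type*} [Group G] {a b : G}

lemma pow_val_natCast (ha : a ^ n = 1) (k : ℕ) : a ^ (k : ZMod n).val = a ^ k := by
  rw [ZMod.val_natCast, ← pow_eq_pow_mod _ ha]

lemma mul_pow_mul_self (hb : b * b = 1) (hab : b * a * b = a⁻¹) (k : ℕ) :
    b * a ^ k * b = (a ^ k)⁻¹ := by
  have hb' : b⁻¹ = b := inv_eq_of_mul_eq_one_left hb
  calc b * a ^ k * b = (b * a * b⁻¹) ^ k := by rw [conj_pow, hb']
    _ = (a ^ k)⁻¹ := by rw [hb', hab, inv_pow]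

variable [NeZero n]

lemma pow_val_add (ha : a ^ n = 1) (i j : ZMod n) : a ^ (i + j).val = a ^ i.val * a ^ j.val := by
  rw [ZMod.val_add, ← pow_eq_pow_mod _ ha, pow_add]

lemma pow_val_neg_add (ha : a ^ n = 1) (i j : ZMod n) :
    a ^ (-i + j).val = (a ^ i.val)⁻¹ * a ^ j.val := by
  rw [pow_val_add ha, inv_eq_of_mul_eq_one_left (by rw [← pow_val_add ha, neg_add_cancel,
    ZMod.val_zero, pow_zero])]

def lift (ha : a ^ n = 1) (hb : b * b = 1) (hab : b * a * b = a⁻¹) : DihedralGroup n →* G where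
  toFun
    | r i => a ^ i.val
    | sr i => b * a ^ i.val
  map_one' := by simp only [one_def, ZMod.val_zero, pow_zero]
  map_mul' := by
    rintro (i | i) (j | j)
    · simp only [r_mul_r, pow_val_add ha]
    · simp only [r_mul_sr, sub_eq_neg_add, pow_val_neg_add ha, ← mul_pow_mul_self hb hab,
        ← mul_assoc, hb, one_mul]
    · simp only [sr_mul_r, pow_val_add ha, mul_assoc]
    · simp only [sr_mul_sr, sub_eq_neg_add, pow_val_neg_add ha, ← mul_pow_mul_self hb hab,
        mul_assoc]

@[simp]
lemma lift_r (ha : a ^ n = 1) (hb : b * b = 1) (hab : b * a * b = a⁻¹) (i : ZMod n) :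
    lift ha hb hab (r i) = a ^ i.val :=
  rfl

@[simp]
lemma lift_sr (ha : a ^ n = 1) (hb : b * b = 1) (hab : b * a * b = a⁻¹) (i : ZMod n) :
    lift ha hb hab (sr i) = b * a ^ i.val :=
  rfl

lemma range_lift (ha : a ^ n = 1) (hb : b * b = 1) (hab : b * a * b = a⁻¹) :
    (lift ha hb hab).range = Subgroup.closure {a, b} := by
  have ha' : a ∈ Subgroup.closure {a, b} := Subgroup.subset_closure (by simp)
  have hb' : b ∈ Subgroup.closure {a, b} := Subgroup.subset_closure (by simp)
  apply le_antisymm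
  · rintro _ ⟨i | i, rfl⟩
    · exact pow_mem ha' _
    · exact mul_mem hb' (pow_mem ha' _)
  · rw [Subgroup.closure_le]
    rintro _ (rfl | rfl)
    · exact ⟨r 1, by simpa using pow_val_natCast ha 1⟩
    · exact ⟨sr 0, by simp⟩

end DihedralGroup

theorem IsPrimitiveRoot.exists_pow_mul_eq_of_pow_eq_pow {R : Type*} [CommRing R] [IsDomain R]
    {n : ℕ} {ζ α y : R} (hζ : IsPrimitiveRoot ζ n) (hn : n ≠ 0) (h : y ^ n = α ^ n) :
    ∃ i < n, ζ ^ i * α = y := by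
  have hy : y ∈ nthRoots n (α ^ n) := (mem_nthRoots (Nat.pos_of_ne_zero hn)).2 h
  simpa [hζ.nthRoots_eq rfl] using hy

noncomputable def dihedralPoly {R : Type*} [CommRing R] (n : ℕ) (g f : R) : R[X] :=
  X ^ (2 * n) - C (2 * g) * X ^ n + C (f ^ n)

section CommRing

variable {R S : Type*} [CommRing R] [CommRing S] {n : ℕ} {g f : R}

@[simp]
lemma eval_dihedralPoly (x : R) :
    eval x (dihedralPoly n g f) = x ^ (2 * n) - 2 * g * x ^ n + f ^ n := by
  simp [dihedralPoly]

@[simp]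
lemma map_dihedralPoly (φ : R →+* S) :
    (dihedralPoly n g f).map φ = dihedralPoly n (φ g) (φ f) := by
  simp [dihedralPoly, map_ofNat]

lemma aeval_dihedralPoly [Algebra R S] (x : S) :
    aeval x (dihedralPoly n g f) =
      eval x (dihedralPoly n (algebraMap R S g) (algebraMap R S f)) := by
  rw [aeval_def, eval₂_eq_eval_map, map_dihedralPoly]

lemma dihedralPoly_eq_mul {a b : R} (hsum : a + b = 2 * g) (hprod : a * b = f ^ n) :
    dihedralPoly n g f = (X ^ n - C a) * (X ^ n - C b) := by
  rw [dihedralPoly, ← hsum, ← hprod, C_add, C_mul]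
  ring

lemma natDegree_dihedralPoly [Nontrivial R] (hn : n ≠ 0) :
    (dihedralPoly n g f).natDegree = 2 * n := by
  unfold dihedralPoly
  compute_degree!
  · simp [hn, show 2 * n ≠ n by omega]
  all_goals omega

end CommRing

section Field

variable {K : Type*} [Field K] {n : ℕ} {g f θ ζ : K}

lemma ne_zero_of_irreducible_dihedralPoly (h : Irreducible (dihedralPoly n g f)) :
    n ≠ 0 ∧ f ≠ 0 := by
  have hn : n ≠ 0 := by
    rintro rfl
    have hC : dihedralPoly 0 g f = C (2 - 2 * g) := by
      simp only [dihedralPoly, mul_zero, pow_zero, mul_one, C_sub, C_mul, C_1, map_ofNat]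
      ring
    exact not_irreducible_C _ (hC ▸ h)
  refine ⟨hn, ?_⟩
  rintro rfl
  have hfac : dihedralPoly n g 0 = X ^ n * (X ^ n - C (2 * g)) := by
    rw [dihedralPoly, zero_pow hn, C_0]
    ring
  rw [hfac] at h
  rcases h.isUnit_or_isUnit rfl with h | h
  · exact not_isUnit_X ((isUnit_pow_iff hn).1 h)
  · exact not_isUnit_of_natDegree_pos _ (by rwa [natDegree_X_pow_sub_C, Nat.pos_iff_ne_zero]) h

lemma dihedralPoly_eq_mul_of_eval_eq_zero (hθ : θ ≠ 0) (h : eval θ (dihedralPoly n g f) = 0) :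
    dihedralPoly n g f = (X ^ n - C (θ ^ n)) * (X ^ n - C ((f / θ) ^ n)) := by
  have hθn : θ ^ n ≠ 0 := pow_ne_zero n hθ
  apply dihedralPoly_eq_mul
  · rw [eval_dihedralPoly, pow_mul'] at h
    rw [div_pow]
    field_simp
    linear_combination h
  · rw [div_pow, mul_div_cancel₀ _ hθn]

lemma eval_mul_dihedralPoly (hζ : ζ ^ n = 1) (x : K) :
    eval (ζ * x) (dihedralPoly n g f) = eval x (dihedralPoly n g f) := by
  simp only [eval_dihedralPoly, mul_pow, hζ, pow_mul', one_mul]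

lemma eval_div_dihedralPoly (hθ : θ ≠ 0) (h : eval θ (dihedralPoly n g f) = 0) :
    eval (f / θ) (dihedralPoly n g f) = 0 := by
  rw [eval_dihedralPoly, pow_mul'] at h ⊢
  rw [div_pow]
  field_simp
  linear_combination (f ^ n) * h

lemma splits_dihedralPoly (hζ : IsPrimitiveRoot ζ n) (hθ : θ ≠ 0)
    (h : eval θ (dihedralPoly n g f) = 0) : (dihedralPoly n g f).Splits := by
  rw [dihedralPoly_eq_mul_of_eval_eq_zero hθ h]
  exact (X_pow_sub_C_splits_of_isPrimitiveRoot hζ rfl).mul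
    (X_pow_sub_C_splits_of_isPrimitiveRoot hζ rfl)

lemma exists_eq_of_eval_dihedralPoly_eq_zero (hζ : IsPrimitiveRoot ζ n) (hn : n ≠ 0)
    (hθ : θ ≠ 0) (h : eval θ (dihedralPoly n g f) = 0) {y : K}
    (hy : eval y (dihedralPoly n g f) = 0) :
    ∃ i < n, ζ ^ i * θ = y ∨ ζ ^ i * (f / θ) = y := by
  rw [dihedralPoly_eq_mul_of_eval_eq_zero hθ h] at hy
  simp only [eval_mul, eval_sub, eval_pow, eval_X, eval_C, mul_eq_zero, sub_eq_zero] at hy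
  rcases hy with hy | hy
  · obtain ⟨i, hi, rfl⟩ := hζ.exists_pow_mul_eq_of_pow_eq_pow hn hy
    exact ⟨i, hi, .inl rfl⟩
  · obtain ⟨i, hi, rfl⟩ := hζ.exists_pow_mul_eq_of_pow_eq_pow hn hy
    exact ⟨i, hi, .inr rfl⟩

end Field

namespace AdjoinRoot

lemma algEquiv_ext {R S : Type*} [CommRing R] [CommRing S] [Algebra R S] {f : R[X]}
    {e₁ e₂ : AdjoinRoot f ≃ₐ[R] S} (h : e₁ (root f) = e₂ (root f)) : e₁ = e₂ :=
  AlgEquiv.coe_toAlgHom_injective (algHom_ext h)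

lemma aeval_root_self {R : Type*} [CommRing R] {f : R[X]} : aeval (root f) f = 0 := by
  rw [aeval_eq, mk_self]

variable {K : Type*} [Field K] {P : K[X]} [Fact (Irreducible P)]

instance finiteDimensional : FiniteDimensional K (AdjoinRoot P) :=
  (powerBasis (Fact.out : Irreducible P).ne_zero).finite

noncomputable def autOfRoot (y : AdjoinRoot P) (hy : aeval y P = 0) :
    AdjoinRoot P ≃ₐ[K] AdjoinRoot P :=
  .ofBijective (liftAlgHom P (Algebra.ofId K _) y hy) (Algebra.IsAlgebraic.algHom_bijective _)

@[simp]
lemma autOfRoot_root (y : AdjoinRoot P) (hy : aeval y P = 0) : autOfRoot y hy (root P) = y :=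
  liftAlgHom_root P _ y hy

lemma isGalois_of_splits [PerfectField K] (h : (P.map (algebraMap K (AdjoinRoot P))).Splits) :
    IsGalois K (AdjoinRoot P) := by
  have hP : Irreducible P := Fact.out
  have : P.IsSplittingField K (AdjoinRoot P) := by
    refine ⟨h, ?_⟩
    rw [eq_top_iff, ← adjoinRoot_eq_top]
    apply Algebra.adjoin_mono
    rw [Set.singleton_subset_iff, mem_rootSet_of_ne hP.ne_zero]
    exact aeval_root_self
  exact IsGalois.of_separable_splitting_field (PerfectField.separable_of_irreducible hP)

lemma card_algEquiv [IsGalois K (AdjoinRoot P)] :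
    Nat.card (AdjoinRoot P ≃ₐ[K] AdjoinRoot P) = P.natDegree := by
  rw [IsGalois.card_aut_eq_finrank]
  exact finrank_quotient_span_eq_natDegree

end AdjoinRoot

section DihedralExtension

open AdjoinRoot

variable {K : Type*} [Field K] {n : ℕ} {g f ξ : K}
  [hirr : Fact (Irreducible (dihedralPoly n g f))]

local notation "L" => AdjoinRoot (dihedralPoly n g f)
local notation "θ" => root (dihedralPoly n g f)

lemma eval_root_dihedralPoly :
    eval θ (dihedralPoly n (algebraMap K L g) (algebraMap K L f)) = 0 := by
  rw [← aeval_dihedralPoly, aeval_root_self]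

lemma algebraMap_ne_zero_of_irreducible_dihedralPoly : algebraMap K L f ≠ 0 :=
  (_root_.map_ne_zero _).2 (ne_zero_of_irreducible_dihedralPoly hirr.out).2

lemma root_dihedralPoly_ne_zero : θ ≠ 0 := by
  have hn : n ≠ 0 := (ne_zero_of_irreducible_dihedralPoly hirr.out).1
  intro h
  have h0 := eval_root_dihedralPoly (n := n) (g := g) (f := f)
  rw [h, eval_dihedralPoly, zero_pow (by positivity), zero_pow hn, mul_zero, sub_zero,
    zero_add] at h0
  exact algebraMap_ne_zero_of_irreducible_dihedralPoly (pow_eq_zero_iff hn |>.1 h0)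

variable (g f) in
noncomputable def dihedralRotation (hξ : ξ ^ n = 1) : L ≃ₐ[K] L :=
  autOfRoot (algebraMap K L ξ * θ) <| by
    rw [aeval_dihedralPoly, eval_mul_dihedralPoly (by rw [← map_pow, hξ, map_one]),
      eval_root_dihedralPoly]

variable (n g f) in
noncomputable def dihedralReflection : L ≃ₐ[K] L :=
  autOfRoot (algebraMap K L f / θ) <| by
    rw [aeval_dihedralPoly, eval_div_dihedralPoly root_dihedralPoly_ne_zero eval_root_dihedralPoly]

lemma dihedralRotation_root (hξ : ξ ^ n = 1) :
    dihedralRotation g f hξ θ = algebraMap K L ξ * θ :=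
  autOfRoot_root _ _

lemma dihedralReflection_root : dihedralReflection n g f θ = algebraMap K L f / θ :=
  autOfRoot_root _ _

lemma dihedralRotation_pow_root (hξ : ξ ^ n = 1) (k : ℕ) :
    (dihedralRotation g f hξ ^ k) θ = algebraMap K L ξ ^ k * θ := by
  induction k with
  | zero => simp
  | succ k ih =>
    rw [pow_succ, AlgEquiv.mul_apply, dihedralRotation_root, map_mul, AlgEquiv.commutes, ih]
    ring

lemma dihedralRotation_pow_eq_one (hξ : ξ ^ n = 1) : dihedralRotation g f hξ ^ n = 1 :=
  algEquiv_ext <| by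
    rw [dihedralRotation_pow_root, ← map_pow, hξ, map_one, one_mul, AlgEquiv.one_apply]

lemma dihedralReflection_mul_self : dihedralReflection n g f * dihedralReflection n g f = 1 :=
  algEquiv_ext <| by
    rw [AlgEquiv.mul_apply, dihedralReflection_root, map_div₀, AlgEquiv.commutes,
      dihedralReflection_root, AlgEquiv.one_apply,
      div_div_cancel₀ algebraMap_ne_zero_of_irreducible_dihedralPoly]

lemma dihedralReflection_mul_rotation_mul_reflection (hξ : ξ ^ n = 1) :
    dihedralReflection n g f * dihedralRotation g f hξ * dihedralReflection n g f =
      (dihedralRotation g f hξ)⁻¹ := by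
  have hξ0 : algebraMap K L ξ ≠ 0 := (_root_.map_ne_zero _).2 <|
    ne_zero_pow (ne_zero_of_irreducible_dihedralPoly hirr.out).1 (by rw [hξ]; exact one_ne_zero)
  have hf := algebraMap_ne_zero_of_irreducible_dihedralPoly (n := n) (g := g) (f := f)
  have hθ := root_dihedralPoly_ne_zero (n := n) (g := g) (f := f)
  refine eq_inv_of_mul_eq_one_left (algEquiv_ext ?_)
  simp only [AlgEquiv.mul_apply, dihedralRotation_root, dihedralReflection_root, map_mul,
    map_div₀, AlgEquiv.commutes, AlgEquiv.one_apply]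
  field_simp

lemma exists_eq_dihedralRotation_pow (hξ : IsPrimitiveRoot ξ n) (e : L ≃ₐ[K] L) :
    ∃ i < n, e = dihedralRotation g f hξ.pow_eq_one ^ i ∨
      e = dihedralReflection n g f * dihedralRotation g f hξ.pow_eq_one ^ i := by
  have he : eval (e θ) (dihedralPoly n (algebraMap K L g) (algebraMap K L f)) = 0 := by
    rw [← aeval_dihedralPoly, aeval_algEquiv, AlgHom.comp_apply, aeval_root_self, map_zero]
  obtain ⟨i, hi, h | h⟩ := exists_eq_of_eval_dihedralPoly_eq_zero
    (hξ.map_of_injective (algebraMap K L).injective)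
    (ne_zero_of_irreducible_dihedralPoly hirr.out).1
    root_dihedralPoly_ne_zero eval_root_dihedralPoly he
  · exact ⟨i, hi, .inl (algEquiv_ext (by rw [dihedralRotation_pow_root, h]))⟩
  · refine ⟨i, hi, .inr (algEquiv_ext ?_)⟩
    rw [AlgEquiv.mul_apply, dihedralRotation_pow_root, map_mul, ← map_pow, AlgEquiv.commutes,
      dihedralReflection_root, map_pow, h]

lemma isGalois_adjoinRoot_dihedralPoly [PerfectField K] (hξ : IsPrimitiveRoot ξ n) :
    IsGalois K L :=
  isGalois_of_splits <| by
    rw [map_dihedralPoly]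
    exact splits_dihedralPoly (hξ.map_of_injective (algebraMap K L).injective)
      root_dihedralPoly_ne_zero eval_root_dihedralPoly

variable (g f) in
noncomputable def dihedralGaloisHom [NeZero n] (hξ : ξ ^ n = 1) :
    DihedralGroup n →* (L ≃ₐ[K] L) :=
  DihedralGroup.lift (dihedralRotation_pow_eq_one hξ) dihedralReflection_mul_self
    (dihedralReflection_mul_rotation_mul_reflection hξ)

lemma dihedralGaloisHom_surjective [NeZero n] (hξ : IsPrimitiveRoot ξ n) :
    Function.Surjective (dihedralGaloisHom g f hξ.pow_eq_one) := by
  intro e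
  have hpow := DihedralGroup.pow_val_natCast
    (dihedralRotation_pow_eq_one (g := g) (f := f) hξ.pow_eq_one)
  obtain ⟨i, -, rfl | rfl⟩ := exists_eq_dihedralRotation_pow hξ e
  · exact ⟨.r i, hpow i⟩
  · exact ⟨.sr i, congrArg (_ * ·) (hpow i)⟩

lemma dihedralGaloisHom_bijective [NeZero n] [PerfectField K] (hξ : IsPrimitiveRoot ξ n) :
    Function.Bijective (dihedralGaloisHom g f hξ.pow_eq_one) := by
  have := isGalois_adjoinRoot_dihedralPoly (g := g) (f := f) hξ
  refine (dihedralGaloisHom_surjective hξ).bijective_of_nat_card_le ?_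
  rw [DihedralGroup.nat_card, card_algEquiv, natDegree_dihedralPoly (NeZero.ne n)]

lemma closure_dihedralRotation_dihedralReflection (hξ : IsPrimitiveRoot ξ n) :
    Subgroup.closure {dihedralRotation g f hξ.pow_eq_one, dihedralReflection n g f} = ⊤ := by
  have : NeZero n := ⟨(ne_zero_of_irreducible_dihedralPoly hirr.out).1⟩
  rw [← MonoidHom.range_eq_top.2 (dihedralGaloisHom_surjective (g := g) (f := f) hξ)]
  exact (DihedralGroup.range_lift _ _ _).symm

end DihedralExtension

theorem dihedral_galois_extension_general {K : Type*} [Field K] [CharZero K]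
    (n : ℕ) (ξ : K) (hξ : IsPrimitiveRoot ξ n) (Gg F : K)
    (P : Polynomial K)
    (hP : P = X ^ (2 * n) - C (2 * Gg) * X ^ n + C (F ^ n))
    [hirr : Fact (Irreducible P)] :
    IsGalois K (AdjoinRoot P) ∧
    Nonempty ((AdjoinRoot P ≃ₐ[K] AdjoinRoot P) ≃* DihedralGroup n) ∧
    ∃ σ τ : AdjoinRoot P ≃ₐ[K] AdjoinRoot P,
      σ (AdjoinRoot.root P) = algebraMap K (AdjoinRoot P) ξ * AdjoinRoot.root P ∧
      τ (AdjoinRoot.root P) = algebraMap K (AdjoinRoot P) F / AdjoinRoot.root P ∧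
      Subgroup.closure {σ, τ} = ⊤ := by
  obtain rfl : P = dihedralPoly n Gg F := hP
  have : NeZero n := ⟨(ne_zero_of_irreducible_dihedralPoly hirr.out).1⟩
  exact ⟨isGalois_adjoinRoot_dihedralPoly hξ,
    ⟨(MulEquiv.ofBijective (dihedralGaloisHom Gg F _) (dihedralGaloisHom_bijective hξ)).symm⟩,
    _, _, dihedralRotation_root hξ.pow_eq_one, dihedralReflection_root,
    closure_dihedralRotation_dihedralReflection hξ⟩

/-- If `K` is a field of characteristic 0 containing a primitive `n`-th root of unity
and `x^{2n} − 2·Gg·x^n + F^n` is irreducible over `K`, then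
`L = K[x]/(x^{2n} − 2·Gg·x^n + F^n)` is a Galois extension of `K` whose Galois group is
the dihedral group `D_n`, the action being generated by `σ(x) = ξ x` and
`τ(x) = F/x`. -/
theorem dihedral_galois_extension {K : Type*} [Field K] [CharZero K]
    (n : ℕ) (hn : 0 < n) (ξ : K) (hξ : IsPrimitiveRoot ξ n) (Gg F : K)
    (P : Polynomial K)
    (hP : P = X ^ (2 * n) - C (2 * Gg) * X ^ n + C (F ^ n))
    [hirr : Fact (Irreducible P)] :
    IsGalois K (AdjoinRoot P) ∧
    Nonempty ((AdjoinRoot P ≃ₐ[K] AdjoinRoot P) ≃* DihedralGroup n) ∧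
    ∃ σ τ : AdjoinRoot P ≃ₐ[K] AdjoinRoot P,
      σ (AdjoinRoot.root P) = algebraMap K (AdjoinRoot P) ξ * AdjoinRoot.root P ∧
      τ (AdjoinRoot.root P) = algebraMap K (AdjoinRoot P) F / AdjoinRoot.root P ∧
      Subgroup.closure {σ, τ} = ⊤ :=
  dihedral_galois_extension_general n ξ hξ Gg F P hP (hirr := hirr)
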